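/- arXiv:1001.4907 — 2 statements merged into one kernel-verified Lean document; each statement's English description precedes it below -/
import Mathlib

section
/- Fix t ∈ [0,T] and a ∈ ℝ. The map ω ↦ M_{t ∧ τ̲_a(ω)}(ω) is upper semicontinuous on E; equivalently, for every b ∈ ℝ the set {ω ∈ E : M_{t ∧ τ̲_a(ω)}(ω) < b} is open in E. -/
open Set

/-- Lower hitting time `τ̲_a(ω) = inf{t ∈ [0,T] : M_t(ω) ≥ a} ∧ T` (with `inf ∅ = +∞`),
realized as `sInf ({t ∈ [0,T] | M ω t ≥ a} ∪ {T})`. -/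
noncomputable def tauLow {E : Type*} (T : ℝ) (M : E → ℝ → ℝ) (a : ℝ) (ω : E) : ℝ :=
  sInf ({s ∈ Set.Icc (0 : ℝ) T | a ≤ M ω s} ∪ {T})

/-!
The hitting time `τ = tauLow T M a ω` is the least element of the closed set
`{s ∈ [0,T] | a ≤ M ω s} ∪ {T}`, so `M ω < a` before `τ`, `M ω τ ≤ a` if `τ > 0`, and
`M ω τ ≥ a` if `τ < T`. By compactness of `[0, l]`, if `M ω₀ < a` on `[0, l]` then `τ(ω) > l`
for `ω` near `ω₀`. Let `σ = t ∧ τ` and `M ω₀ σ₀ < b`, and pick `l < σ₀ < r` with `M ω s < b` for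
`ω` near `ω₀` and `s ∈ (l, r)`. Near `ω₀` we then have `σ(ω) > l`; either `σ(ω) < r` and we are
done, or `σ(ω) ≥ r > σ₀`, which forces `σ₀ = τ₀ < T`, hence `a ≤ M ω₀ σ₀ < b`, while
`M ω σ(ω) ≤ a`.
-/

open Filter Topology

section JointContinuity

variable {X : Type*} [TopologicalSpace X] {x₀ : X} {c : ℝ}

lemma eventually_forall_lt_of_isCompact {Y : Type*} [TopologicalSpace Y] {f : X → Y → ℝ}
    {S : Set Y} (hf : ContinuousOn (fun p : X × Y => f p.1 p.2) (univ ×ˢ S))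
    {K : Set Y} (hK : IsCompact K) (hKS : K ⊆ S) (h : ∀ y ∈ K, f x₀ y < c) :
    ∀ᶠ x in 𝓝 x₀, ∀ y ∈ K, f x y < c := by
  have hP : ∀ y ∈ K, ∀ᶠ z : X × Y in 𝓝 (x₀, y), z ∈ univ ×ˢ S → f z.1 z.2 < c :=
    fun y hy => eventually_nhdsWithin_iff.1 <|
      (hf (x₀, y) ⟨mem_univ _, hKS hy⟩).eventually (Iio_mem_nhds (h y hy))
  filter_upwards [hK.eventually_forall_of_forall_eventually
    (P := fun x y => (x, y) ∈ univ ×ˢ S → f x y < c) hP] with x hx y hy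
  exact hx y hy ⟨mem_univ x, hKS hy⟩

lemma exists_Ioo_eventually_forall_lt {f : X → ℝ → ℝ} {S : Set ℝ} {s₀ : ℝ}
    (hf : ContinuousWithinAt (fun p : X × ℝ => f p.1 p.2) (univ ×ˢ S) (x₀, s₀))
    (h : f x₀ s₀ < c) :
    ∃ l < s₀, ∃ r > s₀, ∀ᶠ x in 𝓝 x₀, ∀ s ∈ S, s ∈ Ioo l r → f x s < c := by
  have hev := hf.eventually (Iio_mem_nhds h)
  rw [nhdsWithin_prod_eq, nhdsWithin_univ] at hev
  obtain ⟨p, hp, q, hq, hpq⟩ := eventually_prod_iff.1 hev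
  obtain ⟨l, r, ⟨hl, hr⟩, hlr⟩ :=
    mem_nhds_iff_exists_Ioo_subset.1 (eventually_nhdsWithin_iff.1 hq)
  exact ⟨l, hl, r, hr, hp.mono fun x hx s hs hslr => hpq hx (hlr hslr hs)⟩

end JointContinuity

section HittingTime

variable {E : Type*} {T : ℝ} {M : E → ℝ → ℝ} {a : ℝ} {ω : E}

lemma bddBelow_hitSet (hT : 0 ≤ T) :
    BddBelow ({s ∈ Icc (0 : ℝ) T | a ≤ M ω s} ∪ {T}) := by
  refine ⟨0, ?_⟩
  rintro s (⟨hs, -⟩ | rfl)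
  exacts [hs.1, hT]

lemma tauLow_le (hT : 0 ≤ T) : tauLow T M a ω ≤ T :=
  csInf_le (bddBelow_hitSet hT) (Or.inr rfl)

lemma tauLow_nonneg (hT : 0 ≤ T) : 0 ≤ tauLow T M a ω := by
  refine le_csInf ⟨T, Or.inr rfl⟩ ?_
  rintro s (⟨hs, -⟩ | rfl)
  exacts [hs.1, hT]

lemma lt_of_lt_tauLow (hT : 0 ≤ T) {s : ℝ} (hs : s ∈ Icc 0 T) (h : s < tauLow T M a ω) :
    M ω s < a :=
  lt_of_not_ge fun has => (csInf_le (bddBelow_hitSet hT) (Or.inl ⟨hs, has⟩)).not_gt h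

lemma tauLow_mem (hT : 0 ≤ T) (hMω : ContinuousOn (M ω) (Icc 0 T)) :
    tauLow T M a ω ∈ {s ∈ Icc (0 : ℝ) T | a ≤ M ω s} ∪ {T} := by
  have hclosed : IsClosed ({s ∈ Icc (0 : ℝ) T | a ≤ M ω s} ∪ {T}) :=
    (hMω.preimage_isClosed_of_isClosed isClosed_Icc isClosed_Ici).union isClosed_singleton
  exact hclosed.csInf_mem ⟨T, Or.inr rfl⟩ (bddBelow_hitSet hT)

lemma le_apply_tauLow (hT : 0 ≤ T) (hMω : ContinuousOn (M ω) (Icc 0 T))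
    (h : tauLow T M a ω < T) : a ≤ M ω (tauLow T M a ω) := by
  rcases tauLow_mem hT hMω with hmem | hmem
  exacts [hmem.2, absurd hmem h.ne]

lemma lt_tauLow (hT : 0 ≤ T) (hMω : ContinuousOn (M ω) (Icc 0 T)) {u : ℝ} (hu : u < T)
    (h : ∀ s ∈ Icc 0 u, M ω s < a) : u < tauLow T M a ω := by
  by_contra! hτu
  rcases tauLow_mem hT hMω with hmem | hmem
  · exact (h _ ⟨hmem.1.1, hτu⟩).not_ge hmem.2
  · exact hu.not_ge (hmem ▸ hτu)

lemma apply_tauLow_le (hT : 0 ≤ T) (hMω : ContinuousOn (M ω) (Icc 0 T))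
    (h : 0 < tauLow T M a ω) : M ω (tauLow T M a ω) ≤ a := by
  set τ := tauLow T M a ω
  have hτT : τ ≤ T := tauLow_le hT
  have : (𝓝[Ico 0 τ] τ).NeBot := by
    rw [← mem_closure_iff_nhdsWithin_neBot, closure_Ico h.ne]
    exact right_mem_Icc.2 h.le
  have hlim : Tendsto (M ω) (𝓝[Ico 0 τ] τ) (𝓝 (M ω τ)) :=
    (hMω τ ⟨h.le, hτT⟩).mono fun s hs => ⟨hs.1, hs.2.le.trans hτT⟩
  refine le_of_tendsto hlim (eventually_nhdsWithin_of_forall fun s hs => ?_)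
  exact (lt_of_lt_tauLow hT ⟨hs.1, hs.2.le.trans hτT⟩ hs.2).le

lemma min_tauLow_mem_Icc {t : ℝ} (ht : t ∈ Icc 0 T) : min t (tauLow T M a ω) ∈ Icc 0 T :=
  ⟨le_min ht.1 (tauLow_nonneg (ht.1.trans ht.2)), (min_le_left _ _).trans ht.2⟩

lemma apply_min_tauLow_le {t : ℝ} (ht : t ∈ Icc 0 T) (hMω : ContinuousOn (M ω) (Icc 0 T))
    (h : 0 < min t (tauLow T M a ω)) : M ω (min t (tauLow T M a ω)) ≤ a := by
  have hT : 0 ≤ T := ht.1.trans ht.2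
  rcases le_or_gt (tauLow T M a ω) t with hτt | htτ
  · rw [min_eq_right hτt] at h ⊢
    exact apply_tauLow_le hT hMω h
  · rw [min_eq_left htτ.le]
    exact (lt_of_lt_tauLow hT ht htτ).le

end HittingTime

lemma upperSemicontinuous_apply_min_tauLow {E : Type*} [TopologicalSpace E] {T : ℝ}
    {M : E → ℝ → ℝ} (hM : ContinuousOn (fun p : E × ℝ => M p.1 p.2) (univ ×ˢ Icc 0 T))
    (a : ℝ) {t : ℝ} (ht : t ∈ Icc 0 T) :
    UpperSemicontinuous fun ω => M ω (min t (tauLow T M a ω)) := by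
  have hT : 0 ≤ T := ht.1.trans ht.2
  have hslice : ∀ ω, ContinuousOn (M ω) (Icc 0 T) := fun ω =>
    hM.comp (Continuous.prodMk_right ω).continuousOn fun s hs => ⟨mem_univ ω, hs⟩
  intro ω₀ b hb
  set σ₀ := min t (tauLow T M a ω₀)
  have hσ₀ : σ₀ ∈ Icc 0 T := min_tauLow_mem_Icc ht
  obtain ⟨l, hl, r, hr, hnear⟩ :=
    exists_Ioo_eventually_forall_lt (hM (ω₀, σ₀) ⟨mem_univ _, hσ₀⟩) hb
  have hlT : l ≤ T := hl.le.trans hσ₀.2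
  have hlτ₀ : l < tauLow T M a ω₀ := hl.trans_le (min_le_right _ _)
  have hbefore : ∀ᶠ ω in 𝓝 ω₀, ∀ s ∈ Icc 0 l, M ω s < a :=
    eventually_forall_lt_of_isCompact hM isCompact_Icc (Icc_subset_Icc_right hlT)
      fun s hs => lt_of_lt_tauLow hT ⟨hs.1, hs.2.trans hlT⟩ (hs.2.trans_lt hlτ₀)
  filter_upwards [hnear, hbefore] with ω hωnear hωbefore
  have hlσ : l < min t (tauLow T M a ω) :=
    lt_min (hl.trans_le (min_le_left _ _))
      (lt_tauLow hT (hslice ω) (hl.trans_le hσ₀.2) hωbefore)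
  by_cases hσr : min t (tauLow T M a ω) < r
  · exact hωnear _ (min_tauLow_mem_Icc ht) ⟨hlσ, hσr⟩
  · have hσ₀t : σ₀ < t := (hr.trans_le (not_lt.1 hσr)).trans_le (min_le_left _ _)
    have hσ₀τ₀ : σ₀ = tauLow T M a ω₀ :=
      min_eq_right (le_of_not_ge fun h => hσ₀t.ne (min_eq_left h))
    have ha : a ≤ M ω₀ σ₀ :=
      hσ₀τ₀ ▸ le_apply_tauLow hT (hslice ω₀) (hσ₀τ₀ ▸ hσ₀t.trans_le ht.2)
    have hσpos : 0 < min t (tauLow T M a ω) := (hσ₀.1.trans_lt hr).trans_le (not_lt.1 hσr)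
    exact (apply_min_tauLow_le ht (hslice ω) hσpos).trans_lt (ha.trans_lt hb)

theorem stmt_2_general {E : Type*} [MetricSpace E] (T : ℝ)
    (M : E → ℝ → ℝ)
    (hM : ContinuousOn (fun p : E × ℝ => M p.1 p.2) (Set.univ ×ˢ Set.Icc 0 T))
    (a : ℝ) (t : ℝ) (ht : t ∈ Set.Icc 0 T) :
    UpperSemicontinuous (fun ω => M ω (min t (tauLow T M a ω))) ∧
      ∀ b : ℝ, IsOpen {ω : E | M ω (min t (tauLow T M a ω)) < b} := by
  have husc := upperSemicontinuous_apply_min_tauLow hM a ht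
  exact ⟨husc, upperSemicontinuous_iff_isOpen_preimage.1 husc⟩

theorem stmt_2 {E : Type*} [MetricSpace E] (T : ℝ) (hT : 0 < T)
    (M : E → ℝ → ℝ)
    (hM : ContinuousOn (fun p : E × ℝ => M p.1 p.2) (Set.univ ×ˢ Set.Icc 0 T))
    (a : ℝ) (t : ℝ) (ht : t ∈ Set.Icc 0 T) :
    UpperSemicontinuous (fun ω => M ω (min t (tauLow T M a ω))) ∧
      ∀ b : ℝ, IsOpen {ω : E | M ω (min t (tauLow T M a ω)) < b} :=
  stmt_2_general T M hM a t ht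
end

section
/- Fix t ∈ [0,T] and a ∈ ℝ. The map ω ↦ M_{t ∧ τ̄_a(ω)}(ω) is lower semicontinuous on E; equivalently, for every b ∈ ℝ the set {ω ∈ E : M_{t ∧ τ̄_a(ω)}(ω) > b} is open in E. -/
/-!
Write `τ = τ̄_a(ω)`. Before `τ` the path stays `≤ a`, and by continuity so does `M_τ` when
`τ > 0`; when `τ < T`, `τ` is a limit of times where `M > a`, so `M_τ ≥ a`. Hence for `b ≥ a`
the event `{M_{t ∧ τ} > b}` is `{M_0 > b}`, while for `b < a` it is `{τ < t} ∪ {M_t > b}`.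
Both are open: `{τ < t}` is a union over `s < t` of the open sets `{M_s > a}`.
-/

open Set

/-- Upper hitting time `τ̄_a(ω) = inf{t ∈ [0,T] : M_t(ω) > a} ∧ T` (with `inf ∅ = +∞`),
realized as `sInf ({t ∈ [0,T] | M ω t > a} ∪ {T})`. -/
noncomputable def tauUp {E : Type*} (T : ℝ) (M : E → ℝ → ℝ) (a : ℝ) (ω : E) : ℝ :=
  sInf ({s ∈ Set.Icc (0 : ℝ) T | a < M ω s} ∪ {T})

section HittingTime

variable {E : Type*} {T : ℝ} {M : E → ℝ → ℝ} {a b s t : ℝ} {ω : E}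

lemma bddBelow_hittingSet : BddBelow ({s ∈ Icc (0 : ℝ) T | a < M ω s} ∪ {T}) :=
  (bddBelow_Icc.mono (sep_subset _ _)).union bddBelow_singleton

lemma tauUp_mem_Icc (hT : 0 ≤ T) : tauUp T M a ω ∈ Icc 0 T :=
  ⟨le_csInf ⟨T, Or.inr rfl⟩ (by rintro s (⟨⟨hs, -⟩, -⟩ | rfl) <;> assumption),
    csInf_le bddBelow_hittingSet (Or.inr rfl)⟩

lemma tauUp_le_of_mem (hs : s ∈ Icc 0 T) (h : a < M ω s) : tauUp T M a ω ≤ s :=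
  csInf_le bddBelow_hittingSet (Or.inl ⟨hs, h⟩)

lemma apply_le_of_lt_tauUp (hs : s ∈ Icc 0 T) (h : s < tauUp T M a ω) : M ω s ≤ a :=
  not_lt.1 fun h' => (tauUp_le_of_mem hs h').not_gt h

lemma tauUp_lt_iff (ht : t ≤ T) :
    tauUp T M a ω < t ↔ ∃ s ∈ Icc 0 T, s < t ∧ a < M ω s := by
  constructor
  · intro h
    obtain ⟨s, ⟨hs, hM⟩ | rfl, hst⟩ := exists_lt_of_csInf_lt ⟨T, Or.inr rfl⟩ h
    · exact ⟨s, hs, hst, hM⟩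
    · exact absurd ht hst.not_ge
  · rintro ⟨s, hs, hst, hM⟩
    exact (tauUp_le_of_mem hs hM).trans_lt hst

lemma apply_le_of_mem_Ioc_tauUp (hf : ContinuousOn (M ω) (Icc 0 T)) (hT : 0 ≤ T)
    (hs : s ∈ Ioc 0 (tauUp T M a ω)) : M ω s ≤ a := by
  have hτ := tauUp_mem_Icc (M := M) (a := a) (ω := ω) hT
  have hclosed : IsClosed (Icc 0 T ∩ M ω ⁻¹' Iic a) :=
    hf.preimage_isClosed_of_isClosed isClosed_Icc isClosed_Iic
  have hsub : Ico 0 (tauUp T M a ω) ⊆ Icc 0 T ∩ M ω ⁻¹' Iic a := fun r hr =>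
    ⟨⟨hr.1, hr.2.le.trans hτ.2⟩, apply_le_of_lt_tauUp ⟨hr.1, hr.2.le.trans hτ.2⟩ hr.2⟩
  have hs' : s ∈ closure (Ico 0 (tauUp T M a ω)) := by
    rw [closure_Ico (hs.1.trans_le hs.2).ne]
    exact Ioc_subset_Icc_self hs
  exact (closure_minimal hsub hclosed hs').2

lemma le_apply_tauUp (hf : ContinuousOn (M ω) (Icc 0 T)) (hτ : tauUp T M a ω < T) :
    a ≤ M ω (tauUp T M a ω) := by
  have hclosed : IsClosed (Icc 0 T ∩ M ω ⁻¹' Ici a) :=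
    hf.preimage_isClosed_of_isClosed isClosed_Icc isClosed_Ici
  have hmem := csInf_mem_closure ⟨T, Or.inr rfl⟩ (bddBelow_hittingSet (M := M) (a := a) (ω := ω))
  rw [closure_union, closure_singleton] at hmem
  rcases hmem with h | h
  · have hsub : {s ∈ Icc 0 T | a < M ω s} ⊆ Icc 0 T ∩ M ω ⁻¹' Ici a := fun r hr =>
      ⟨hr.1, hr.2.le⟩
    exact (closure_minimal hsub hclosed h).2
  · exact absurd h hτ.ne

lemma lt_apply_min_tauUp_iff_of_le (hf : ContinuousOn (M ω) (Icc 0 T)) (ht : t ∈ Icc 0 T)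
    (hab : a ≤ b) : b < M ω (min t (tauUp T M a ω)) ↔ b < M ω 0 := by
  have hT : 0 ≤ T := ht.1.trans ht.2
  have hτ := tauUp_mem_Icc (M := M) (a := a) (ω := ω) hT
  constructor
  · intro h
    obtain hr | hr := (le_min ht.1 hτ.1).eq_or_lt
    · rwa [← hr] at h
    · exact absurd (apply_le_of_mem_Ioc_tauUp hf hT ⟨hr, min_le_right _ _⟩) (by linarith)
  · intro h
    have hτ0 : tauUp T M a ω = 0 := le_antisymm (tauUp_le_of_mem ⟨le_rfl, hT⟩ (by linarith)) hτ.1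
    rwa [hτ0, min_eq_right ht.1]

lemma lt_apply_min_tauUp_iff_of_lt (hf : ContinuousOn (M ω) (Icc 0 T)) (ht : t ≤ T)
    (hab : b < a) :
    b < M ω (min t (tauUp T M a ω)) ↔ tauUp T M a ω < t ∨ b < M ω t := by
  rcases lt_or_ge (tauUp T M a ω) t with hτt | hτt
  · rw [min_eq_right hτt.le]
    exact iff_of_true (hab.trans_le (le_apply_tauUp hf (hτt.trans_le ht))) (Or.inl hτt)
  · rw [min_eq_left hτt]
    simp only [hτt.not_gt, false_or]

lemma isOpen_setOf_tauUp_lt [TopologicalSpace E]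
    (hM : ∀ s ∈ Icc 0 T, Continuous fun ω => M ω s) (ht : t ≤ T) :
    IsOpen {ω | tauUp T M a ω < t} := by
  have h : {ω | tauUp T M a ω < t} = ⋃ s ∈ Icc 0 T ∩ Iio t, {ω | a < M ω s} := by
    ext ω
    simp only [mem_ofPred_eq, tauUp_lt_iff ht, mem_iUnion, mem_inter_iff, mem_Iio, exists_prop,
      and_assoc]
  rw [h]
  exact isOpen_biUnion fun s hs => isOpen_lt continuous_const (hM s hs.1)

lemma isOpen_setOf_lt_apply_min_tauUp [TopologicalSpace E]
    (hpath : ∀ ω, ContinuousOn (M ω) (Icc 0 T))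
    (hM : ∀ s ∈ Icc 0 T, Continuous fun ω => M ω s) (ht : t ∈ Icc 0 T) (b : ℝ) :
    IsOpen {ω | b < M ω (min t (tauUp T M a ω))} := by
  rcases le_or_gt a b with hab | hab
  · have h : {ω | b < M ω (min t (tauUp T M a ω))} = {ω | b < M ω 0} :=
      ext fun ω => lt_apply_min_tauUp_iff_of_le (hpath ω) ht hab
    rw [h]
    exact isOpen_lt continuous_const (hM 0 ⟨le_rfl, ht.1.trans ht.2⟩)
  · have h : {ω | b < M ω (min t (tauUp T M a ω))} =
        {ω | tauUp T M a ω < t} ∪ {ω | b < M ω t} :=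
      ext fun ω => lt_apply_min_tauUp_iff_of_lt (hpath ω) ht.2 hab
    rw [h]
    exact (isOpen_setOf_tauUp_lt hM ht.2).union (isOpen_lt continuous_const (hM t ht))

end HittingTime

theorem stmt_3_general {E : Type*} [MetricSpace E] (T : ℝ)
    (M : E → ℝ → ℝ)
    (hM : ContinuousOn (fun p : E × ℝ => M p.1 p.2) (Set.univ ×ˢ Set.Icc 0 T))
    (a : ℝ) (t : ℝ) (ht : t ∈ Set.Icc 0 T) :
    LowerSemicontinuous (fun ω => M ω (min t (tauUp T M a ω))) ∧
      ∀ b : ℝ, IsOpen {ω : E | b < M ω (min t (tauUp T M a ω))} := by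
  have hpath : ∀ ω, ContinuousOn (M ω) (Icc 0 T) := fun ω =>
    hM.comp (continuous_const.prodMk continuous_id).continuousOn fun s hs => ⟨trivial, hs⟩
  have hfix : ∀ s ∈ Icc 0 T, Continuous fun ω => M ω s := fun s hs =>
    hM.comp_continuous (continuous_id.prodMk continuous_const) fun _ => ⟨trivial, hs⟩
  have hopen := isOpen_setOf_lt_apply_min_tauUp (a := a) hpath hfix ht
  exact ⟨lowerSemicontinuous_iff_isOpen_preimage.2 hopen, hopen⟩

theorem stmt_3 {E : Type*} [MetricSpace E] (T : ℝ) (hT : 0 < T)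
    (M : E → ℝ → ℝ)
    (hM : ContinuousOn (fun p : E × ℝ => M p.1 p.2) (Set.univ ×ˢ Set.Icc 0 T))
    (a : ℝ) (t : ℝ) (ht : t ∈ Set.Icc 0 T) :
    LowerSemicontinuous (fun ω => M ω (min t (tauUp T M a ω))) ∧
      ∀ b : ℝ, IsOpen {ω : E | b < M ω (min t (tauUp T M a ω))} :=
  stmt_3_general T M hM a t ht
end
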